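/- Let f : V → V' be a linear map of real inner product spaces such that ⟨f(x),f(x)⟩' ≤ a⟨x,x⟩ for all x ∈ V and some constant a > 0. Let Λ = {v_1,...,v_n} be linearly independent in V and Λ' = {v'_1,...,v'_m} a basis of f(Span(Λ)). Then for all x ∈ V, Δ_{Λ'}(f(x),f(x)) ≤ a · (det(Λ')/det(Λ)) · Δ_Λ(x,x). -/

import Mathlib

/-- `Δ_Λ(x, x)`, the Gram determinant of the vectors `v 1, …, v n, x`. -/
noncomputable def DeltaQ {V : Type*} [NormedAddCommGroup V] [InnerProductSpace ℝ V]
    {n : ℕ} (v : Fin n → V) (x : V) : ℝ :=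
  (Matrix.of fun i j : Fin (n + 1) =>
    (inner ℝ ((Fin.snoc v x : Fin (n + 1) → V) i) ((Fin.snoc v x : Fin (n + 1) → V) j) : ℝ)).det

/-- The Gram determinant `det(Λ) = det (⟪v i, v j⟫)`. -/
noncomputable def gramDet {V : Type*} [NormedAddCommGroup V] [InnerProductSpace ℝ V]
    {n : ℕ} (v : Fin n → V) : ℝ :=
  (Matrix.of fun i j : Fin n => (inner ℝ (v i) (v j) : ℝ)).det

/-!
Write `x = y + z` with `y` the orthogonal projection of `x` onto `span Λ`. Subtracting from the
last row of the Gram matrix of `Λ, x` the combination of the other rows that produces `⟪y, ·⟫`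
leaves the row `(0, …, 0, ‖z‖²)`, so `Δ_Λ(x, x) = det(Λ) · ‖x - y‖²`, and likewise
`Δ_{Λ'}(f x, f x) = det(Λ') · dist(f x, span Λ')²`. Since `f y ∈ f(span Λ) = span Λ'`, that
distance is at most `‖f (x - y)‖`, whose square is at most `a ‖x - y‖²`.
-/

theorem Matrix.det_eq_mul_det_submatrix_castSucc_of_row_last_eq_single {R : Type*} [CommRing R]
    {n : ℕ} (M : Matrix (Fin (n + 1)) (Fin (n + 1)) R) {q : R}
    (h : M (Fin.last n) = Pi.single (Fin.last n) q) :
    M.det = q * (M.submatrix Fin.castSucc Fin.castSucc).det := by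
  rw [det_succ_row M (Fin.last n), Fintype.sum_eq_single (Fin.last n)]
  · simp [h, Fin.succAbove_last, ← two_mul, pow_mul]
  · intro j hj
    simp [h, hj]

section Gram

open Submodule

variable {V : Type*} [NormedAddCommGroup V] [InnerProductSpace ℝ V] {n : ℕ}

theorem deltaQ_add_eq_gramDet_mul_norm_sq (v : Fin n → V) {y z : V}
    (hy : y ∈ span ℝ (Set.range v)) (hz : z ∈ (span ℝ (Set.range v))ᗮ) :
    DeltaQ v (y + z) = gramDet v * ‖z‖ ^ 2 := by
  obtain ⟨c, hc⟩ := (mem_span_range_iff_exists_fun ℝ).mp hy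
  set w : Fin (n + 1) → V := Fin.snoc v (y + z)
  set G := Matrix.of fun i j => (inner ℝ (w i) (w j) : ℝ)
  set e : Fin (n + 1) → ℝ := Pi.single (Fin.last n) (‖z‖ ^ 2)
  have hyw (j : Fin (n + 1)) :
      (inner ℝ y (w j) : ℝ) = ∑ k, (Fin.snoc c 0 : Fin (n + 1) → ℝ) k * G k j := by
    simp [← hc, sum_inner, Fin.sum_univ_castSucc, G, w, real_inner_smul_left]
  have hzw (j : Fin (n + 1)) : (inner ℝ z (w j) : ℝ) = e j := by
    refine Fin.lastCases ?_ (fun j => ?_) j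
    · simp [e, w, inner_add_right, inner_left_of_mem_orthogonal hy hz]
    · simp [e, w, inner_left_of_mem_orthogonal (subset_span (Set.mem_range_self j)) hz,
        (Fin.castSucc_lt_last j).ne]
  have hrow : G (Fin.last n) = e + ∑ k, (Fin.snoc c 0 : Fin (n + 1) → ℝ) k • G k := by
    funext j
    simp only [Pi.add_apply, Finset.sum_apply, Pi.smul_apply, smul_eq_mul, ← hzw, ← hyw]
    simp [G, w, inner_add_left, add_comm]
  have hdet : G.det = (G.updateRow (Fin.last n) e).det := by
    conv_lhs => rw [← G.updateRow_eq_self (Fin.last n), hrow]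
    simp [Matrix.det_updateRow_add, Matrix.det_updateRow_sum]
  rw [DeltaQ, mul_comm]
  change G.det = _
  rw [hdet, Matrix.det_eq_mul_det_submatrix_castSucc_of_row_last_eq_single _ Matrix.updateRow_self]
  congr 2
  ext i j
  simp [G, w]

theorem deltaQ_eq_gramDet_mul_norm_sub_starProjection_sq (v : Fin n → V)
    [(span ℝ (Set.range v)).HasOrthogonalProjection] (x : V) :
    DeltaQ v x = gramDet v * ‖x - (span ℝ (Set.range v)).starProjection x‖ ^ 2 := by
  conv_lhs => rw [← add_sub_cancel ((span ℝ (Set.range v)).starProjection x) x]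
  exact deltaQ_add_eq_gramDet_mul_norm_sq v (starProjection_apply_mem _ x)
    (sub_starProjection_mem_orthogonal x)

theorem gramDet_pos {v : Fin n → V} (hv : LinearIndependent ℝ v) : 0 < gramDet v :=
  (Matrix.posDef_gram_of_linearIndependent hv).det_pos

theorem gramDet_nonneg (v : Fin n → V) : 0 ≤ gramDet v :=
  (Matrix.posSemidef_gram ℝ v).det_nonneg

end Gram

theorem Submodule.norm_sub_starProjection_le {𝕜 E : Type*} [RCLike 𝕜] [NormedAddCommGroup E]
    [InnerProductSpace 𝕜 E] {U : Submodule 𝕜 E} [U.HasOrthogonalProjection] (y : E) {x : E}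
    (hx : x ∈ U) : ‖y - U.starProjection y‖ ≤ ‖y - x‖ := by
  rw [starProjection_minimal]
  exact ciInf_le ⟨0, Set.forall_mem_range.mpr fun _ => norm_nonneg _⟩ (⟨x, hx⟩ : U)

theorem Submodule.norm_sub_starProjection_map_le {𝕜 E F : Type*} [RCLike 𝕜]
    [NormedAddCommGroup E] [InnerProductSpace 𝕜 E] [NormedAddCommGroup F] [InnerProductSpace 𝕜 F]
    (f : E →ₗ[𝕜] F) {K : Submodule 𝕜 E} {K' : Submodule 𝕜 F} [K.HasOrthogonalProjection]
    [K'.HasOrthogonalProjection] (hK : K.map f ≤ K') (x : E) :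
    ‖f x - K'.starProjection (f x)‖ ≤ ‖f (x - K.starProjection x)‖ := by
  rw [map_sub]
  exact norm_sub_starProjection_le _ (hK (mem_map_of_mem (starProjection_apply_mem K x)))

theorem delta_image_le_general {V V' : Type*}
    [NormedAddCommGroup V] [InnerProductSpace ℝ V]
    [NormedAddCommGroup V'] [InnerProductSpace ℝ V']
    (f : V →ₗ[ℝ] V') (a : ℝ)
    (hf : ∀ x : V, (inner ℝ (f x) (f x) : ℝ) ≤ a * (inner ℝ x x : ℝ))
    {n m : ℕ} (v : Fin n → V) (hv : LinearIndependent ℝ v)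
    (v' : Fin m → V')
    (hspan : Submodule.span ℝ (Set.range v') =
      Submodule.map f (Submodule.span ℝ (Set.range v)))
    (x : V) :
    DeltaQ v' (f x) ≤ a * (gramDet v' / gramDet v) * DeltaQ v x := by
  set K := Submodule.span ℝ (Set.range v)
  set K' := Submodule.span ℝ (Set.range v')
  have : FiniteDimensional ℝ K := FiniteDimensional.span_of_finite ℝ (Set.finite_range v)
  have : FiniteDimensional ℝ K' := FiniteDimensional.span_of_finite ℝ (Set.finite_range v')
  have hdist : ‖f x - K'.starProjection (f x)‖ ^ 2 ≤ a * ‖x - K.starProjection x‖ ^ 2 := by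
    calc ‖f x - K'.starProjection (f x)‖ ^ 2
        ≤ ‖f (x - K.starProjection x)‖ ^ 2 := by
          gcongr
          exact Submodule.norm_sub_starProjection_map_le f hspan.ge x
      _ ≤ a * ‖x - K.starProjection x‖ ^ 2 := by
          simpa only [real_inner_self_eq_norm_sq] using hf (x - K.starProjection x)
  rw [deltaQ_eq_gramDet_mul_norm_sub_starProjection_sq v,
    deltaQ_eq_gramDet_mul_norm_sub_starProjection_sq v']
  calc gramDet v' * ‖f x - K'.starProjection (f x)‖ ^ 2
      ≤ gramDet v' * (a * ‖x - K.starProjection x‖ ^ 2) :=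
        mul_le_mul_of_nonneg_left hdist (gramDet_nonneg v')
    _ = a * (gramDet v' / gramDet v) * (gramDet v * ‖x - K.starProjection x‖ ^ 2) := by
        field_simp [(gramDet_pos hv).ne']

/-- If `f : V → V'` is linear with `⟪f x, f x⟫' ≤ a ⟪x, x⟫`, `Λ` is linearly independent
in `V`, and `Λ'` is a basis of `f(Span Λ)`, then
`Δ_{Λ'}(f x, f x) ≤ a · (det Λ' / det Λ) · Δ_Λ(x, x)`. -/
theorem delta_image_le {V V' : Type*}
    [NormedAddCommGroup V] [InnerProductSpace ℝ V]
    [NormedAddCommGroup V'] [InnerProductSpace ℝ V']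
    (f : V →ₗ[ℝ] V') (a : ℝ) (ha : 0 < a)
    (hf : ∀ x : V, (inner ℝ (f x) (f x) : ℝ) ≤ a * (inner ℝ x x : ℝ))
    {n m : ℕ} (v : Fin n → V) (hv : LinearIndependent ℝ v)
    (v' : Fin m → V') (hv' : LinearIndependent ℝ v')
    (hspan : Submodule.span ℝ (Set.range v') =
      Submodule.map f (Submodule.span ℝ (Set.range v)))
    (x : V) :
    DeltaQ v' (f x) ≤ a * (gramDet v' / gramDet v) * DeltaQ v x :=
  delta_image_le_general f a hf v hv v' hspan x
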